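/- Let σ₁,…,σ_k be the elementary symmetric polynomials in z₁,…,z_k. The vector field V₁ = Σ_{j=1}^k z_j² ∂_{z_j} pushes forward under π = (σ₁,…,σ_k) to U₁ = Σ_{h=1}^k (σ₁σ_h − (h+1)σ_{h+1}) ∂_{σ_h}; equivalently, for each h ∈ [1,k], Σ_{j=1}^k z_j² ∂σ_h/∂z_j = σ₁σ_h − (h+1)σ_{h+1}, with the convention σ_{k+1} = 0. -/

import Mathlib

/-!
Write `ẑⱼ` for the variables other than `zⱼ`. Splitting off `zⱼ` gives
`σₙ₊₁(z) = σₙ₊₁(ẑⱼ) + zⱼ σₙ(ẑⱼ)`, so `∂σₙ₊₁/∂zⱼ = σₙ(ẑⱼ)` and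
`zⱼ² ∂σₙ₊₁/∂zⱼ = zⱼ σₙ₊₁(z) - zⱼ σₙ₊₁(ẑⱼ)`. Summing over `j`, the first terms give `σ₁σₙ₊₁`, and
`∑ⱼ zⱼ σₙ₊₁(ẑⱼ) = (n + 2) σₙ₊₂` because every `(n + 2)`-subset of the variables arises from
`n + 2` choices of `j`.
-/

/-- The elementary symmetric function of degree `h` in `k` variables. -/
noncomputable def esymm (k h : ℕ) (z : Fin k → ℂ) : ℂ :=
  ∑ s ∈ Finset.powersetCard h Finset.univ, ∏ i ∈ s, z i

namespace Finset

variable {α β : Type*} [DecidableEq α] [AddCommMonoid β] {s : Finset α} {a : α}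

lemma sum_powersetCard_succ_insert (ha : a ∉ s) (n : ℕ) (f : Finset α → β) :
    ∑ t ∈ (insert a s).powersetCard (n + 1), f t =
      ∑ t ∈ s.powersetCard (n + 1), f t + ∑ t ∈ s.powersetCard n, f (insert a t) := by
  rw [powersetCard_succ_insert ha, sum_union, sum_image]
  · exact insert_erase_invOn.2.injOn.mono fun t ht ↦ notMem_mono (mem_powersetCard.1 ht).1 ha
  · aesop (add simp [disjoint_left, insert_subset_iff])

lemma sum_sum_powersetCard_erase (s : Finset α) (n : ℕ) (f : α → Finset α → β) :
    ∑ a ∈ s, ∑ t ∈ (s.erase a).powersetCard n, f a t =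
      ∑ u ∈ s.powersetCard (n + 1), ∑ a ∈ u, f a (u.erase a) := by
  rw [sum_sigma', sum_sigma']
  refine sum_nbij' (fun p ↦ ⟨insert p.1 p.2, p.1⟩) (fun q ↦ ⟨q.2, q.1.erase q.2⟩) ?_ ?_ ?_ ?_ ?_
  · rintro ⟨a, t⟩ h
    simp only [mem_sigma, mem_powersetCard, subset_erase] at h ⊢
    refine ⟨⟨insert_subset h.1 h.2.1.1, ?_⟩, mem_insert_self a t⟩
    rw [card_insert_of_notMem h.2.1.2, h.2.2]
  · rintro ⟨u, a⟩ h
    simp only [mem_sigma, mem_powersetCard] at h ⊢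
    exact ⟨h.1.1 h.2, erase_subset_erase a h.1.1, by rw [card_erase_of_mem h.2, h.1.2]; rfl⟩
  · rintro ⟨a, t⟩ h
    simp only [mem_sigma, mem_powersetCard, subset_erase] at h
    simp [erase_insert h.2.1.2]
  · rintro ⟨u, a⟩ h
    simp only [mem_sigma] at h
    simp [insert_erase h.2]
  · rintro ⟨a, t⟩ h
    simp only [mem_sigma, mem_powersetCard, subset_erase] at h
    simp [erase_insert h.2.1.2]

end Finset

open Finset

section esymmOn

variable {ι R : Type*}

section CommSemiring

variable [CommSemiring R] {s : Finset ι} {j : ι}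

def esymmOn (s : Finset ι) (n : ℕ) (z : ι → R) : R :=
  ∑ t ∈ s.powersetCard n, ∏ i ∈ t, z i

lemma esymmOn_zero (s : Finset ι) (z : ι → R) : esymmOn s 0 z = 1 := by
  simp [esymmOn]

lemma esymmOn_one (s : Finset ι) (z : ι → R) : esymmOn s 1 z = ∑ i ∈ s, z i := by
  simp [esymmOn, powersetCard_one]

lemma esymmOn_congr {z w : ι → R} (n : ℕ) (h : ∀ i ∈ s, z i = w i) :
    esymmOn s n z = esymmOn s n w :=
  sum_congr rfl fun _ ht ↦ prod_congr rfl fun i hi ↦ h i ((mem_powersetCard.1 ht).1 hi)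

variable [DecidableEq ι]

lemma esymmOn_insert (hj : j ∉ s) (n : ℕ) (z : ι → R) :
    esymmOn (insert j s) (n + 1) z = esymmOn s (n + 1) z + z j * esymmOn s n z := by
  rw [esymmOn, sum_powersetCard_succ_insert hj, esymmOn, esymmOn, mul_sum]
  congr 1
  exact sum_congr rfl fun t ht ↦ prod_insert fun hjt ↦ hj ((mem_powersetCard.1 ht).1 hjt)

lemma esymmOn_succ_of_mem (hj : j ∈ s) (n : ℕ) (z : ι → R) :
    esymmOn s (n + 1) z = esymmOn (s.erase j) (n + 1) z + z j * esymmOn (s.erase j) n z := by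
  simpa only [insert_erase hj] using esymmOn_insert (notMem_erase j s) n z

lemma esymmOn_update_succ (hj : j ∈ s) (n : ℕ) (z : ι → R) (x : R) :
    esymmOn s (n + 1) (Function.update z j x) =
      esymmOn (s.erase j) (n + 1) z + x * esymmOn (s.erase j) n z := by
  have hz : ∀ i ∈ s.erase j, Function.update z j x i = z i :=
    fun i hi ↦ Function.update_of_ne (ne_of_mem_erase hi) x z
  rw [esymmOn_succ_of_mem hj, Function.update_self, esymmOn_congr _ hz, esymmOn_congr _ hz]

lemma sum_mul_esymmOn_erase (s : Finset ι) (n : ℕ) (z : ι → R) :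
    ∑ j ∈ s, z j * esymmOn (s.erase j) n z = (n + 1) * esymmOn s (n + 1) z := by
  simp_rw [esymmOn, mul_sum, sum_sum_powersetCard_erase s n fun j t ↦ z j * ∏ i ∈ t, z i]
  refine sum_congr rfl fun u hu ↦ ?_
  rw [sum_congr rfl fun j hj ↦ mul_prod_erase u z hj, sum_const, (mem_powersetCard.1 hu).2,
    nsmul_eq_mul]
  push_cast
  ring

end CommSemiring

lemma sum_sq_mul_esymmOn_erase [DecidableEq ι] [CommRing R] (s : Finset ι) (n : ℕ) (z : ι → R) :
    ∑ j ∈ s, z j ^ 2 * esymmOn (s.erase j) n z =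
      esymmOn s 1 z * esymmOn s (n + 1) z - (n + 2) * esymmOn s (n + 2) z := by
  have hsplit : ∀ j ∈ s, z j ^ 2 * esymmOn (s.erase j) n z =
      z j * esymmOn s (n + 1) z - z j * esymmOn (s.erase j) (n + 1) z := fun j hj ↦ by
    rw [esymmOn_succ_of_mem hj]
    ring
  rw [sum_congr rfl hsplit, sum_sub_distrib, sum_mul_esymmOn_erase, esymmOn_one, sum_mul]
  push_cast
  ring

lemma hasDerivAt_esymmOn_update_succ [DecidableEq ι] {𝕜 : Type*} [NontriviallyNormedField 𝕜]
    {s : Finset ι} {j : ι} (hj : j ∈ s) (n : ℕ) (z : ι → 𝕜) (x : 𝕜) :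
    HasDerivAt (fun t ↦ esymmOn s (n + 1) (Function.update z j t)) (esymmOn (s.erase j) n z) x := by
  simp only [esymmOn_update_succ hj]
  simpa using ((hasDerivAt_id x).mul_const (esymmOn (s.erase j) n z)).const_add
    (esymmOn (s.erase j) (n + 1) z)

end esymmOn

lemma esymm_eq_esymmOn (k h : ℕ) (z : Fin k → ℂ) : esymm k h z = esymmOn univ h z := rfl

theorem stmt13_general (k : ℕ) (z : Fin k → ℂ) (h : ℕ) :
    ∑ j : Fin k, (z j) ^ 2 * deriv (fun t : ℂ => esymm k h (Function.update z j t)) (z j)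
      = esymm k 1 z * esymm k h z - ((h + 1 : ℕ) : ℂ) * esymm k (h + 1) z := by
  simp only [esymm_eq_esymmOn]
  cases h with
  | zero => simp [esymmOn_zero]
  | succ n =>
    simp only [(hasDerivAt_esymmOn_update_succ (mem_univ _) n z _).deriv]
    rw [sum_sq_mul_esymmOn_erase]
    push_cast
    ring

/-- Σ_j z_j² ∂σ_h/∂z_j = σ₁σ_h − (h+1)σ_{h+1} (with σ_{k+1} = 0), i.e. V₁ pushes
forward to U₁ = Σ_h (σ₁σ_h − (h+1)σ_{h+1}) ∂_{σ_h}. -/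
theorem stmt13 (k : ℕ) (z : Fin k → ℂ) (h : ℕ) (h1 : 1 ≤ h) (h2 : h ≤ k) :
    ∑ j : Fin k, (z j) ^ 2 * deriv (fun t : ℂ => esymm k h (Function.update z j t)) (z j)
      = esymm k 1 z * esymm k h z - ((h + 1 : ℕ) : ℂ) * esymm k (h + 1) z :=
  stmt13_general k z h
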